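/- arXiv:1202.0982 — 2 statements merged into one kernel-verified Lean document; each statement's English description precedes it below -/
import Mathlib

section
/- Let r : ℝ → ℝ be a smooth 2π-periodic function. Suppose A, B, C, D ∈ ℝ satisfy A + B(cos t + r'(t) sin t)e^{-r(t)} + C(sin t - r'(t) cos t)e^{-r(t)} + D(cos t + r'(t) sin t)(sin t - r'(t) cos t)e^{-2r(t)} = 0 for all t, and that r''(t) - (r'(t))² - 1 ≠ 0 on a dense subset of ℝ. Then A = B = C = D = 0. -/
open Real

theorem stmt_2 (r : ℝ → ℝ) (hr : ContDiff ℝ (⊤ : ℕ∞) r)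
    (hper : ∀ t, r (t + 2 * π) = r t)
    (hdense : Dense {t : ℝ | deriv (deriv r) t - (deriv r t) ^ 2 - 1 ≠ 0})
    (A B C D : ℝ)
    (heq : ∀ t : ℝ,
      A + B * ((Real.cos t + deriv r t * Real.sin t) * Real.exp (-r t))
        + C * ((Real.sin t - deriv r t * Real.cos t) * Real.exp (-r t))
        + D * ((Real.cos t + deriv r t * Real.sin t) *
            (Real.sin t - deriv r t * Real.cos t) * Real.exp (-2 * r t)) = 0) :
    A = 0 ∧ B = 0 ∧ C = 0 ∧ D = 0 := by
  have hrinf : ContDiff ℝ ((⊤:ℕ∞) : WithTop ℕ∞) r := hr.of_le (by simp)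
  have hr1 : ContDiff ℝ ((⊤:ℕ∞) : WithTop ℕ∞) (deriv r) := (contDiff_infty_iff_deriv.mp hrinf).2
  have hd : Differentiable ℝ r := hr.differentiable (by simp)
  have hd1 : Differentiable ℝ (deriv r) := hr1.differentiable (by simp)
  -- the function G with e^{-r}·e^{-r} in place of e^{-2r}
  set G : ℝ → ℝ := fun t =>
    A + B * ((Real.cos t + deriv r t * Real.sin t) * Real.exp (-r t))
      + C * ((Real.sin t - deriv r t * Real.cos t) * Real.exp (-r t))
      + D * (((Real.cos t + deriv r t * Real.sin t) * Real.exp (-r t)) *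
          ((Real.sin t - deriv r t * Real.cos t) * Real.exp (-r t))) with hGdef
  have hG0 : ∀ t, G t = 0 := by
    intro t
    have he : Real.exp (-r t) * Real.exp (-r t) = Real.exp (-2 * r t) := by
      rw [← Real.exp_add]; ring_nf
    simp only [hGdef]
    linear_combination heq t + D * (Real.cos t + deriv r t * Real.sin t) *
      (Real.sin t - deriv r t * Real.cos t) * he
  set h : ℝ → ℝ := fun t =>
    B * Real.sin t - C * Real.cos t
      + D * (Real.sin t * ((Real.sin t - deriv r t * Real.cos t) * Real.exp (-r t))
           - Real.cos t * ((Real.cos t + deriv r t * Real.sin t) * Real.exp (-r t))) with hhdef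
  have hkey : ∀ t, (deriv (deriv r) t - (deriv r t) ^ 2 - 1) * Real.exp (-r t) * h t = 0 := by
    intro t
    have hE : HasDerivAt (fun t => Real.exp (-r t)) (Real.exp (-r t) * (-deriv r t)) t :=
      HasDerivAt.exp ((hd t).hasDerivAt.neg)
    have hu : HasDerivAt (fun t => (Real.cos t + deriv r t * Real.sin t) * Real.exp (-r t))
        ((deriv (deriv r) t - (deriv r t) ^ 2 - 1) * Real.sin t * Real.exp (-r t)) t := by
      have h1 : HasDerivAt (fun t => Real.cos t + deriv r t * Real.sin t)
          (-Real.sin t + (deriv (deriv r) t * Real.sin t + deriv r t * Real.cos t)) t :=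
        (Real.hasDerivAt_cos t).add (((hd1 t).hasDerivAt).mul (Real.hasDerivAt_sin t))
      have : HasDerivAt (fun t => (Real.cos t + deriv r t * Real.sin t) * Real.exp (-r t)) _ t :=
        h1.mul hE
      convert this using 1; ring
    have hv : HasDerivAt (fun t => (Real.sin t - deriv r t * Real.cos t) * Real.exp (-r t))
        (-((deriv (deriv r) t - (deriv r t) ^ 2 - 1) * Real.cos t * Real.exp (-r t))) t := by
      have h1 : HasDerivAt (fun t => Real.sin t - deriv r t * Real.cos t)
          (Real.cos t - (deriv (deriv r) t * Real.cos t + deriv r t * (-Real.sin t))) t :=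
        (Real.hasDerivAt_sin t).sub (((hd1 t).hasDerivAt).mul (Real.hasDerivAt_cos t))
      have : HasDerivAt (fun t => (Real.sin t - deriv r t * Real.cos t) * Real.exp (-r t)) _ t :=
        h1.mul hE
      convert this using 1; ring
    have hG : HasDerivAt G
        ((deriv (deriv r) t - (deriv r t) ^ 2 - 1) * Real.exp (-r t) * h t) t := by
      have : HasDerivAt G _ t := ((((hasDerivAt_const t A).add (hu.const_mul B)).add (hv.const_mul C)).add
        ((hu.mul hv).const_mul D))
      convert this using 1
      simp only [hhdef]; ring
    have hGz : G = fun _ => 0 := funext hG0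
    rw [hGz] at hG
    exact hG.unique (hasDerivAt_const t 0)
  have hcont : Continuous h := by
    simp only [hhdef]
    have hc1 : Continuous (deriv r) := hr1.continuous
    have hcr : Continuous r := hr.continuous
    fun_prop
  have hheq : h = fun _ => 0 := by
    apply Continuous.ext_on hdense hcont continuous_const
    intro t ht
    have := hkey t
    have hexp : Real.exp (-r t) ≠ 0 := Real.exp_ne_zero _
    have hk : (deriv (deriv r) t - (deriv r t) ^ 2 - 1) ≠ 0 := ht
    have := mul_eq_zero.mp this
    rcases this with h' | h'
    · rcases mul_eq_zero.mp h' with h'' | h''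
      · exact absurd h'' hk
      · exact absurd h'' hexp
    · exact h'
  have hz : ∀ t, h t = 0 := fun t => congrFun hheq t
  have h1 := hz (π / 2)
  have h2 := hz (-(π / 2))
  simp only [hhdef, Real.sin_pi_div_two, Real.cos_pi_div_two, Real.sin_neg, Real.cos_neg,
    mul_zero, mul_one, zero_mul, one_mul, sub_zero, zero_sub, neg_neg, mul_neg, neg_mul] at h1 h2
  have e1 : (0:ℝ) < Real.exp (-r (π / 2)) := Real.exp_pos _
  have e2 : (0:ℝ) < Real.exp (-r (-(π / 2))) := Real.exp_pos _
  have hD : D = 0 := by nlinarith [h1, h2, e1, e2]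
  have hB : B = 0 := by rw [hD] at h1; linarith
  have h3 := hz 0
  simp only [hhdef, Real.sin_zero, Real.cos_zero, mul_zero, mul_one, zero_mul, one_mul,
    sub_zero, zero_sub, hD, hB] at h3
  have hC : C = 0 := by linarith
  have h4 := heq 0
  rw [hB, hC, hD] at h4
  simp at h4
  exact ⟨h4, hB, hC, hD⟩
end

section
/- Let r : ℝ → ℝ be a smooth π-periodic function with r'(0) = 0 and r''(0) ≠ 1, let λ ≠ 0 and c ≠ 0 be reals. If constants A, D satisfy A·e^{2r(t)} + D·((2c² - λ)(-r'(t) cos 2t + ½(1 - r'(t)²) sin 2t) - (λ/2)(r''(t) - r'(t)² - 1) sin 2t) = 0 for all t ∈ ℝ, then A = D = 0. -/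
open Real

theorem stmt_9 (r : ℝ → ℝ) (hr : ContDiff ℝ (⊤ : ℕ∞) r)
    (hper : ∀ t, r (t + π) = r t)
    (h0 : deriv r 0 = 0) (h1 : deriv (deriv r) 0 ≠ 1)
    (lam c : ℝ) (hlam : lam ≠ 0) (hc : c ≠ 0)
    (A D : ℝ)
    (heq : ∀ t : ℝ,
      A * Real.exp (2 * r t)
        + D * ((2 * c ^ 2 - lam) *
            (-(deriv r t) * Real.cos (2 * t) + (1 / 2) * (1 - (deriv r t) ^ 2) * Real.sin (2 * t))
          - (lam / 2) * (deriv (deriv r) t - (deriv r t) ^ 2 - 1) * Real.sin (2 * t)) = 0) :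
    A = 0 ∧ D = 0 := by
  have hA : A = 0 := by
    have h := heq 0
    simp [h0] at h
    exact h
  refine ⟨hA, ?_⟩
  by_contra hD
  set F : ℝ → ℝ := fun t => (2 * c ^ 2 - lam) *
      (-(deriv r t) * Real.cos (2 * t) + (1 / 2) * (1 - (deriv r t) ^ 2) * Real.sin (2 * t))
      - (lam / 2) * (deriv (deriv r) t - (deriv r t) ^ 2 - 1) * Real.sin (2 * t) with hFdef
  have hF : ∀ t, F t = 0 := by
    intro t
    have h := heq t
    rw [hA] at h
    have h' : D * F t = 0 := by simpa [hFdef] using h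
    exact (mul_eq_zero.mp h').resolve_left hD
  have hrinf : ContDiff ℝ ((⊤ : ℕ∞) : WithTop ℕ∞) r := hr.of_le (by simp)
  have hr' := (contDiff_infty_iff_deriv.mp hrinf).2
  have hr'' := (contDiff_infty_iff_deriv.mp hr').2
  set a := deriv (deriv r) 0 with ha
  set b := deriv (deriv (deriv r)) 0 with hb
  have hda : HasDerivAt (deriv r) a 0 := (hr'.differentiable (by simp) 0).hasDerivAt
  have hdb : HasDerivAt (deriv (deriv r)) b 0 := (hr''.differentiable (by simp) 0).hasDerivAt
  have h2t : HasDerivAt (fun t : ℝ => 2 * t) 2 0 := by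
    simpa using (hasDerivAt_id (0 : ℝ)).const_mul 2
  have hcos : HasDerivAt (fun t : ℝ => Real.cos (2 * t)) (-Real.sin (2 * 0) * 2) 0 := h2t.cos
  have hsin : HasDerivAt (fun t : ℝ => Real.sin (2 * t)) (Real.cos (2 * 0) * 2) 0 := h2t.sin
  have hg : HasDerivAt (fun t : ℝ => (1 / 2 : ℝ) * (1 - (deriv r t) ^ 2))
      ((1 / 2 : ℝ) * (0 - 2 * (deriv r 0) ^ 1 * a)) 0 := by
    exact ((hasDerivAt_const (0 : ℝ) (1 : ℝ)).sub (hda.pow 2)).const_mul (1 / 2)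
  have hFd : HasDerivAt F
      ((2 * c ^ 2 - lam) *
        (((-a) * Real.cos (2 * 0) + (-(deriv r 0)) * (-Real.sin (2 * 0) * 2))
          + (((1 / 2 : ℝ) * (0 - 2 * (deriv r 0) ^ 1 * a)) * Real.sin (2 * 0)
            + ((1 / 2 : ℝ) * (1 - (deriv r 0) ^ 2)) * (Real.cos (2 * 0) * 2)))
      - ((lam / 2) * ((b - 2 * (deriv r 0) ^ 1 * a - 0)) * Real.sin (2 * 0)
          + (lam / 2) * (deriv (deriv r) 0 - (deriv r 0) ^ 2 - 1) * (Real.cos (2 * 0) * 2))) 0 := by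
    exact (((hda.neg.mul hcos).add (hg.mul hsin)).const_mul (2 * c ^ 2 - lam)).sub
      ((((hdb.sub (hda.pow 2)).sub (hasDerivAt_const _ 1)).const_mul (lam / 2)).mul hsin)
  have hF0 : HasDerivAt F 0 0 := by
    have : F = fun _ => (0 : ℝ) := funext hF
    rw [this]
    exact hasDerivAt_const 0 0
  have key := hFd.unique hF0
  simp [h0, ← ha] at key
  -- key should reduce to 2 c² (1 - a) = 0 (in some form)
  apply h1
  have hc2 : c ^ 2 > 0 := by positivity
  nlinarith [key]
end
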